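/- arXiv:2212.12100 — 2 statements merged into one kernel-verified Lean document; each statement's English description precedes it below -/
import Mathlib

section
/- Let f₁,…,f_m : X → (−∞, ∞] (m ≥ 2) be such that at least m−1 are polyhedral convex and the remaining one is generalized polyhedral convex, all continuous at x̄ ∈ L_γ := {x : f_i(x) ≤ γ_i ∀i}. Then N(x̄; L_γ) = {Σ_{i ∈ I(x̄)} λ_i x_i* : λ_i ≥ 0, x_i* ∈ ∂f_i(x̄)}, where I(x̄) = {i : f_i(x̄) = γ_i}. -/
open Set Pointwise

def IsPolyhedral {X : Type*} [AddCommGroup X] [Module ℝ X] [TopologicalSpace X]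
    (P : Set X) : Prop :=
  ∃ (m : ℕ) (f : Fin m → X →L[ℝ] ℝ) (α : Fin m → ℝ),
    P = {x : X | ∀ i, f i x ≤ α i}

def IsGPolyhedral {X : Type*} [AddCommGroup X] [Module ℝ X] [TopologicalSpace X]
    (Q : Set X) : Prop :=
  ∃ (P : Set X) (a : X) (L : Submodule ℝ X),
    IsPolyhedral P ∧ IsClosed (L : Set X) ∧ Q = P ∩ (a +ᵥ (L : Set X))

def normalCone {X : Type*} [AddCommGroup X] [Module ℝ X] [TopologicalSpace X]
    (Ω : Set X) (xb : X) : Set (X →L[ℝ] ℝ) :=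
  {f | ∀ x ∈ Ω, f (x - xb) ≤ 0}

def gph {X Y : Type*} (F : X → Set Y) : Set (X × Y) := {p | p.2 ∈ F p.1}

def coderiv {X Y : Type*} [AddCommGroup X] [Module ℝ X] [TopologicalSpace X]
    [AddCommGroup Y] [Module ℝ Y] [TopologicalSpace Y]
    (F : X → Set Y) (xb : X) (yb : Y) (v : Y →L[ℝ] ℝ) : Set (X →L[ℝ] ℝ) :=
  {u | ∀ x : X, ∀ y ∈ F x, u (x - xb) - v (y - yb) ≤ 0}

def epi {X : Type*} (f : X → EReal) : Set (X × ℝ) := {p | f p.1 ≤ (p.2 : EReal)}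

def subdiff {X : Type*} [AddCommGroup X] [Module ℝ X] [TopologicalSpace X]
    (f : X → EReal) (xb : X) : Set (X →L[ℝ] ℝ) :=
  {g | ∀ x : X, ((g (x - xb) : ℝ) : EReal) + f xb ≤ f x}

def singSubdiff {X : Type*} [AddCommGroup X] [Module ℝ X] [TopologicalSpace X]
    (f : X → EReal) (xb : X) : Set (X →L[ℝ] ℝ) :=
  {g | ∀ x : X, ∀ α : ℝ, f x ≤ (α : EReal) → g (x - xb) ≤ 0}

/-!
Continuity at `xb` makes the domain of each `f i` a neighbourhood of `xb`, so every epigraph has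
nonempty interior and the generalized polyhedral one is in fact polyhedral. Cutting the epigraphs
at the heights `γ i` exhibits the sublevel set as a polyhedron, whose normal cone is, by Farkas'
lemma, generated by its active constraints. Grouping these by function gives, for each `i`, a
normal `Φ` to `epi (f i)` at `(xb, γ i)`. If `Φ (0, 1) < 0`, then `f i xb = γ i` and `Φ` restricted
to `X` is a positive multiple of a subgradient; if `Φ (0, 1) = 0`, the restriction is nonpositive
on the domain of `f i`, a neighbourhood of `xb`, hence zero.
-/

open NNReal Filter Topology

section Polyhedron

variable {E : Type*} [AddCommGroup E] [Module ℝ E] [TopologicalSpace E] {ι : Type*}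

theorem eq_zero_of_forall_apply_nonpos {u : E →L[ℝ] ℝ} (h : ∀ v, u v ≤ 0) : u = 0 :=
  ContinuousLinearMap.ext fun v => le_antisymm (h v) (by simpa using h (-v))

theorem mem_span_image_insert_of_sub_smul_mem [DecidableEq ι] {u : ι → E →L[ℝ] ℝ}
    {g : E →L[ℝ] ℝ} {a : ι} {S : Finset ι} {z : E} (hSz : ∀ i ∈ S, u i z ≤ 0) (hgz : 0 ≤ g z)
    (hg : g - g z • u a ∈ Submodule.span ℝ≥0 ((fun i => u i - u i z • u a) '' S)) :
    g ∈ Submodule.span ℝ≥0 (u '' ↑(insert a S)) := by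
  set K := Submodule.span ℝ≥0 (u '' ↑(insert a S))
  have hua : u a ∈ K := Submodule.subset_span ⟨a, by simp⟩
  have hle : Submodule.span ℝ≥0 ((fun i => u i - u i z • u a) '' S) ≤ K := by
    refine Submodule.span_le.2 ?_
    rintro _ ⟨i, hi, rfl⟩
    dsimp only
    have hi' : u i - u i z • u a = u i + (⟨-u i z, neg_nonneg.2 (hSz i hi)⟩ : ℝ≥0) • u a := by
      ext v; simp [sub_eq_add_neg]
    rw [SetLike.mem_coe, hi']
    exact K.add_mem (Submodule.subset_span ⟨i, by simp [hi]⟩) (K.smul_mem _ hua)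
  have hg' : g = (g - g z • u a) + (⟨g z, hgz⟩ : ℝ≥0) • u a := by
    ext v; simp
  rw [hg']
  exact K.add_mem (hle hg) (K.smul_mem _ hua)

/-- Farkas' lemma. -/
theorem mem_span_image_of_forall_nonpos (S : Finset ι) :
    ∀ (u : ι → E →L[ℝ] ℝ) (g : E →L[ℝ] ℝ), (∀ v, (∀ i ∈ S, u i v ≤ 0) → g v ≤ 0) →
      g ∈ Submodule.span ℝ≥0 (u '' S) := by
  classical
  induction S using Finset.induction_on with
  | empty =>
    intro u g h
    simp [eq_zero_of_forall_apply_nonpos fun v => h v (by simp)]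
  | insert a S haS IH =>
    intro u g h
    by_cases hS : ∀ v, (∀ i ∈ S, u i v ≤ 0) → g v ≤ 0
    · exact Submodule.span_mono (image_mono (by simp)) (IH u g hS)
    obtain ⟨y, hyS, hgy⟩ : ∃ y, (∀ i ∈ S, u i y ≤ 0) ∧ 0 < g y := by
      simpa using hS
    have hay : 0 < u a y := by
      by_contra! hay
      exact hgy.not_ge (h y (by simpa [hay] using hyS))
    set z := (u a y)⁻¹ • y
    have haz : u a z = 1 := by simp [z, hay.ne']
    have hSz : ∀ i ∈ S, u i z ≤ 0 := fun i hi => by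
      simpa [z] using mul_nonpos_of_nonneg_of_nonpos (inv_nonneg.2 hay.le) (hyS i hi)
    have hgz : 0 ≤ g z := by simpa [z] using mul_nonneg (inv_nonneg.2 hay.le) hgy.le
    -- Compose with the projection along `z` onto the kernel of `u a`; the constraints then
    -- satisfy the induction hypothesis.
    have hproj : ∀ (ψ : E →L[ℝ] ℝ) v, (ψ - ψ z • u a) v = ψ (v - u a v • z) := fun ψ v => by
      simp [mul_comm]
    refine mem_span_image_insert_of_sub_smul_mem hSz hgz (IH _ _ fun v hv => ?_)
    rw [hproj]
    refine h _ fun i hi => ?_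
    rcases Finset.mem_insert.1 hi with rfl | hi
    · simp [haz]
    · simpa [hproj] using hv i hi

theorem exists_pos_add_smul_mem_polyhedron [Finite ι] {φ : ι → E →L[ℝ] ℝ} {β : ι → ℝ} {xb : E}
    (hxb : ∀ s, φ s xb ≤ β s) {v : E} (hv : ∀ s, φ s xb = β s → φ s v ≤ 0) :
    ∃ t : ℝ, 0 < t ∧ ∀ s, φ s (xb + t • v) ≤ β s := by
  have h : ∀ s, ∀ᶠ t in 𝓝[>] (0 : ℝ), φ s xb + t * φ s v ≤ β s := by
    intro s
    rcases (hxb s).lt_or_eq with hlt | heq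
    · have hcont : Continuous fun t : ℝ => φ s xb + t * φ s v := by fun_prop
      have := (hcont.tendsto' 0 _ (by simp)).eventually_lt_const hlt
      exact (this.filter_mono nhdsWithin_le_nhds).mono fun t ht => ht.le
    · filter_upwards [self_mem_nhdsWithin] with t (ht : 0 < t)
      nlinarith [hv s heq]
  obtain ⟨t, ht, htpos⟩ := ((eventually_all.2 h).and self_mem_nhdsWithin).exists
  exact ⟨t, htpos, fun s => by simpa using ht s⟩

theorem normalCone_polyhedron [Fintype ι] {φ : ι → E →L[ℝ] ℝ} {β : ι → ℝ} {xb : E}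
    (hxb : ∀ s, φ s xb ≤ β s) :
    normalCone {x | ∀ s, φ s x ≤ β s} xb =
      {g | ∃ μ : ι → ℝ, (∀ s, 0 ≤ μ s) ∧ (∀ s, φ s xb ≠ β s → μ s = 0) ∧
        g = ∑ s, μ s • φ s} := by
  classical
  ext g
  constructor
  · intro hg
    have hdir : ∀ v, (∀ s ∈ Finset.univ.filter fun s => φ s xb = β s, φ s v ≤ 0) → g v ≤ 0 := by
      intro v hv
      obtain ⟨t, ht, hmem⟩ := exists_pos_add_smul_mem_polyhedron hxb (v := v) (by simpa using hv)
      have := hg _ hmem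
      rw [add_sub_cancel_left, map_smul, smul_eq_mul] at this
      exact nonpos_of_mul_nonpos_right this ht
    obtain ⟨c, hc⟩ := (Submodule.mem_span_image_finset_iff_exists_fun' ℝ≥0).1
      (mem_span_image_of_forall_nonpos _ φ g hdir)
    refine ⟨fun s => if φ s xb = β s then c s else 0, fun s => by dsimp only; split_ifs <;> simp,
      fun s hs => if_neg hs, ?_⟩
    rw [← hc, Finset.sum_filter]
    refine Finset.sum_congr rfl fun s _ => ?_
    dsimp only
    split_ifs <;> simp [NNReal.smul_def]
  · rintro ⟨μ, hμ, hμact, rfl⟩ x hx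
    simp only [sum_apply, smul_apply, smul_eq_mul]
    refine Finset.sum_nonpos fun s _ => ?_
    by_cases hs : φ s xb = β s
    · exact mul_nonpos_of_nonneg_of_nonpos (hμ s) (by rw [map_sub]; linarith [hx s])
    · simp [hμact s hs]

end Polyhedron

section Epigraph

variable {X : Type*} [TopologicalSpace X] {f : X → EReal} {xb : X}

theorem interior_epi_nonempty (hcont : ContinuousAt f xb) (hxb : f xb ≠ ⊤) :
    (interior (epi f)).Nonempty := by
  obtain ⟨t₀, ht₀, -⟩ := EReal.lt_iff_exists_real_btwn.1 (lt_top_iff_ne_top.2 hxb)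
  refine ⟨(xb, t₀ + 1), mem_interior_iff_mem_nhds.2 ?_⟩
  filter_upwards [prod_mem_nhds (hcont.eventually_lt_const ht₀) (Ioi_mem_nhds (lt_add_one t₀))]
    with p ⟨hp₁, hp₂⟩
  exact ((show f p.1 < t₀ from hp₁).trans (EReal.coe_lt_coe_iff.2 hp₂)).le

variable [AddCommGroup X] [Module ℝ X]

theorem eq_zero_of_eventually_apply_sub_nonpos [ContinuousAdd X] [ContinuousSMul ℝ X]
    {w : X →L[ℝ] ℝ} (h : ∀ᶠ x in 𝓝 xb, w (x - xb) ≤ 0) : w = 0 := by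
  refine eq_zero_of_forall_apply_nonpos fun v => ?_
  have hline : Tendsto (fun t : ℝ => xb + t • v) (𝓝[>] 0) (𝓝 xb) := by
    have : Continuous fun t : ℝ => xb + t • v := by fun_prop
    simpa using (this.tendsto 0).mono_left nhdsWithin_le_nhds
  obtain ⟨t, ht, htpos⟩ := ((hline.eventually h).and self_mem_nhdsWithin).exists
  rw [add_sub_cancel_left, map_smul, smul_eq_mul] at ht
  exact nonpos_of_mul_nonpos_right ht htpos

theorem IsGPolyhedral.isPolyhedral_of_nonempty_interior [ContinuousAdd X] [ContinuousSMul ℝ X]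
    {Q : Set X} (hQ : IsGPolyhedral Q) (hint : (interior Q).Nonempty) : IsPolyhedral Q := by
  obtain ⟨P, a, L, hP, -, rfl⟩ := hQ
  have hL : L = ⊤ := by
    refine L.eq_top_of_nonempty_interior' ?_
    have := hint.mono (interior_mono inter_subset_right)
    rwa [interior_vadd, vadd_set_nonempty] at this
  simpa [hL] using hP

theorem apply_mk_eq_comp_inl_add (Φ : X × ℝ →L[ℝ] ℝ) (x : X) (t : ℝ) :
    Φ (x, t) = Φ.comp (ContinuousLinearMap.inl ℝ X ℝ) x + t * Φ (0, 1) := by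
  have : ((x, t) : X × ℝ) = (x, 0) + t • (0, 1) := by simp
  rw [this, map_add, map_smul, smul_eq_mul]
  rfl

theorem mem_subdiff_iff {r : ℝ} (hr : f xb = r) {g : X →L[ℝ] ℝ} :
    g ∈ subdiff f xb ↔ ∀ x (t : ℝ), f x ≤ t → g (x - xb) ≤ t - r := by
  constructor
  · intro hg x t hx
    have : ((g (x - xb) + r : ℝ) : EReal) ≤ t := by
      rw [EReal.coe_add, ← hr]; exact (hg x).trans hx
    linarith [EReal.coe_le_coe_iff.1 this]
  · intro hg x
    rw [hr]
    by_cases htop : f x = ⊤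
    · simp [htop]
    by_cases hbot : f x = ⊥
    · linarith [hg x (g (x - xb) + r - 1) (by simp [hbot])]
    have hfx := EReal.coe_toReal htop hbot
    rw [← hfx, ← EReal.coe_add, EReal.coe_le_coe_iff]
    linarith [hg x _ hfx.ge]

theorem apply_comp_inl_le_of_mem_normalCone_epi {Φ : X × ℝ →L[ℝ] ℝ} {γ : ℝ}
    (hΦ : Φ ∈ normalCone (epi f) (xb, γ)) {x : X} {t : ℝ} (hx : f x ≤ t) :
    Φ.comp (ContinuousLinearMap.inl ℝ X ℝ) (x - xb) ≤ -Φ (0, 1) * (t - γ) := by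
  have := hΦ (x, t) hx
  rw [Prod.mk_sub_mk, apply_mk_eq_comp_inl_add] at this
  linarith

theorem le_of_mem_normalCone_epi {Φ : X × ℝ →L[ℝ] ℝ} {γ : ℝ}
    (hΦ : Φ ∈ normalCone (epi f) (xb, γ)) (hΦ₀ : Φ (0, 1) < 0) : (γ : EReal) ≤ f xb := by
  refine EReal.le_of_forall_lt_iff_le.1 fun t ht => EReal.coe_le_coe_iff.2 ?_
  have := apply_comp_inl_le_of_mem_normalCone_epi hΦ ht.le
  rw [sub_self, map_zero] at this
  nlinarith

theorem inv_smul_comp_inl_mem_subdiff {Φ : X × ℝ →L[ℝ] ℝ} {γ : ℝ}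
    (hΦ : Φ ∈ normalCone (epi f) (xb, γ)) (hΦ₀ : Φ (0, 1) < 0) (hxb : f xb = γ) :
    (-Φ (0, 1))⁻¹ • Φ.comp (ContinuousLinearMap.inl ℝ X ℝ) ∈ subdiff f xb := by
  refine (mem_subdiff_iff hxb).2 fun x t hx => ?_
  rw [smul_apply, smul_eq_mul, inv_mul_le_iff₀ (neg_pos.2 hΦ₀)]
  exact apply_comp_inl_le_of_mem_normalCone_epi hΦ hx

theorem subdiff_nonempty_of_isPolyhedral (h : IsPolyhedral (epi f)) (hxb : f xb ≠ ⊤) :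
    (subdiff f xb).Nonempty := by
  by_cases hbot : f xb = ⊥
  · exact ⟨0, fun x => by simp [hbot]⟩
  set r := (f xb).toReal
  have hr : f xb = r := (EReal.coe_toReal hxb hbot).symm
  obtain ⟨n, F, α, hF⟩ := h
  have hmem : ∀ k, F k (xb, r) ≤ α k := by
    have : ((xb, r) : X × ℝ) ∈ epi f := hr.le
    rwa [hF] at this
  -- Moving down from `(xb, f xb)` leaves the epigraph, so some active facet is not vertical.
  obtain ⟨k, hk, hk₀⟩ : ∃ k, F k (xb, r) = α k ∧ F k (0, 1) < 0 := by
    by_contra! hvert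
    obtain ⟨t, ht, hdown⟩ := exists_pos_add_smul_mem_polyhedron hmem (v := (0, -1))
      fun k hk => by
        rw [show ((0 : X), (-1 : ℝ)) = -(0, 1) by simp, map_neg, neg_nonpos]
        exact hvert k hk
    have : ((xb, r) + t • (0, -1) : X × ℝ) ∈ epi f := by rw [hF]; exact hdown
    simp only [epi, mem_ofPred_eq, Prod.smul_mk, Prod.mk_add_mk, smul_zero, add_zero,
      smul_eq_mul, mul_neg, mul_one, hr, EReal.coe_le_coe_iff] at this
    linarith
  have hΦ : F k ∈ normalCone (epi f) (xb, r) := fun p hp => by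
    rw [hF] at hp
    rw [map_sub, hk]
    linarith [hp k]
  exact ⟨_, inv_smul_comp_inl_mem_subdiff hΦ hk₀ hr⟩

theorem exists_comp_inl_eq_smul_of_mem_normalCone_epi [ContinuousAdd X] [ContinuousSMul ℝ X]
    {Φ : X × ℝ →L[ℝ] ℝ} {γ : ℝ} (hΦ : Φ ∈ normalCone (epi f) (xb, γ)) (hxb : f xb ≤ γ)
    (hcont : ContinuousAt f xb) (hne : (subdiff f xb).Nonempty) :
    ∃ c : ℝ, 0 ≤ c ∧ (f xb ≠ γ → c = 0) ∧
      ∃ s ∈ subdiff f xb, Φ.comp (ContinuousLinearMap.inl ℝ X ℝ) = c • s := by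
  have hγ : f xb < (γ + 1 : ℝ) := hxb.trans_lt (EReal.coe_lt_coe_iff.2 (lt_add_one γ))
  have hΦ₀ : Φ (0, 1) ≤ 0 := by
    have := apply_comp_inl_le_of_mem_normalCone_epi hΦ hγ.le
    rw [sub_self, map_zero] at this
    linarith
  rcases hΦ₀.lt_or_eq with hΦ₀ | hΦ₀
  · have hfxb : f xb = γ := le_antisymm hxb (le_of_mem_normalCone_epi hΦ hΦ₀)
    refine ⟨-Φ (0, 1), by linarith, fun h => absurd hfxb h, _,
      inv_smul_comp_inl_mem_subdiff hΦ hΦ₀ hfxb, ?_⟩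
    rw [smul_inv_smul₀ (by linarith)]
  · obtain ⟨s, hs⟩ := hne
    refine ⟨0, le_rfl, fun _ => rfl, s, hs, ?_⟩
    rw [zero_smul]
    -- A vertical normal vanishes on the domain of `f`, which is a neighbourhood of `xb`.
    refine eq_zero_of_eventually_apply_sub_nonpos (xb := xb) ?_
    filter_upwards [hcont.eventually_lt_const hγ] with x hx
    simpa [hΦ₀] using apply_comp_inl_le_of_mem_normalCone_epi hΦ hx.le

theorem subdiff_subset_normalCone_sublevel {γ : ℝ} (h : f xb = γ) :
    subdiff f xb ⊆ normalCone {x | f x ≤ γ} xb := fun _ hg x hx => by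
  simpa using (mem_subdiff_iff h).1 hg x γ hx

end Epigraph

section Sublevel

variable {X : Type*} [AddCommGroup X] [Module ℝ X] [TopologicalSpace X]
  {ι : Type*} {f : ι → X → EReal} {γ : ι → ℝ} {xb : X}

theorem sum_smul_subdiff_subset_normalCone_sublevel [Fintype ι] :
    {g : X →L[ℝ] ℝ | ∃ (c : ι → ℝ) (xs : ι → X →L[ℝ] ℝ),
        (∀ i, 0 ≤ c i) ∧ (∀ i, f i xb ≠ (γ i : EReal) → c i = 0) ∧
        (∀ i, xs i ∈ subdiff (f i) xb) ∧ g = ∑ i, c i • xs i} ⊆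
      normalCone {x | ∀ i, f i x ≤ (γ i : EReal)} xb := by
  rintro _ ⟨c, xs, hc, hcact, hxs, rfl⟩ x hx
  simp only [sum_apply, smul_apply, smul_eq_mul]
  refine Finset.sum_nonpos fun i _ => ?_
  by_cases hi : f i xb = γ i
  · exact mul_nonpos_of_nonneg_of_nonpos (hc i)
      (subdiff_subset_normalCone_sublevel hi (hxs i) x (hx i))
  · simp [hcact i hi]

variable {n : ι → ℕ} {F : ∀ i, Fin (n i) → X × ℝ →L[ℝ] ℝ} {α : ∀ i, Fin (n i) → ℝ}

theorem setOf_forall_le_eq_polyhedron (hF : ∀ i, epi (f i) = {p | ∀ k, F i k p ≤ α i k}) :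
    {x | ∀ i, f i x ≤ (γ i : EReal)} =
      {x | ∀ s : Σ i, Fin (n i), (F s.1 s.2).comp (ContinuousLinearMap.inl ℝ X ℝ) x ≤
        α s.1 s.2 - γ s.1 * F s.1 s.2 (0, 1)} := by
  ext x
  simp only [mem_ofPred_eq, Sigma.forall, le_sub_iff_add_le, ← apply_mk_eq_comp_inl_add]
  exact forall_congr' fun i => (Set.ext_iff.1 (hF i) (x, γ i))

theorem normalCone_sublevel_subset [Fintype ι] [ContinuousAdd X] [ContinuousSMul ℝ X]
    (hF : ∀ i, epi (f i) = {p | ∀ k, F i k p ≤ α i k}) (hxb : ∀ i, f i xb ≤ (γ i : EReal))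
    (hcont : ∀ i, ContinuousAt (f i) xb) :
    normalCone {x | ∀ i, f i x ≤ (γ i : EReal)} xb ⊆
      {g : X →L[ℝ] ℝ | ∃ (c : ι → ℝ) (xs : ι → X →L[ℝ] ℝ),
        (∀ i, 0 ≤ c i) ∧ (∀ i, f i xb ≠ (γ i : EReal) → c i = 0) ∧
        (∀ i, xs i ∈ subdiff (f i) xb) ∧ g = ∑ i, c i • xs i} := by
  have hL := setOf_forall_le_eq_polyhedron (γ := γ) hF
  have hxbL : xb ∈ {x | ∀ i, f i x ≤ (γ i : EReal)} := hxb
  rw [hL] at hxbL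
  intro g hg
  rw [hL, normalCone_polyhedron hxbL] at hg
  obtain ⟨μ, hμ, hμact, rfl⟩ := hg
  have hΦ : ∀ i, ∑ k, μ ⟨i, k⟩ • F i k ∈ normalCone (epi (f i)) (xb, γ i) := by
    intro i
    have hxbi : ∀ k, F i k (xb, γ i) ≤ α i k := by
      have : ((xb, γ i) : X × ℝ) ∈ epi (f i) := hxb i
      rwa [hF i] at this
    rw [hF i, normalCone_polyhedron hxbi]
    refine ⟨_, fun k => hμ _, fun k hk => hμact _ ?_, rfl⟩
    rw [apply_mk_eq_comp_inl_add] at hk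
    exact fun h => hk (by dsimp only at h; linarith)
  choose c hc hcact xs hxs hcomp using fun i =>
    exists_comp_inl_eq_smul_of_mem_normalCone_epi (hΦ i) (hxb i) (hcont i)
      (subdiff_nonempty_of_isPolyhedral ⟨_, _, _, hF i⟩ (ne_top_of_le_ne_top (by simp) (hxb i)))
  refine ⟨c, xs, hc, hcact, hxs, ?_⟩
  rw [Fintype.sum_sigma]
  refine Finset.sum_congr rfl fun i _ => ?_
  rw [← hcomp i]
  ext x
  simp

end Sublevel

variable {X : Type*} [AddCommGroup X] [Module ℝ X] [TopologicalSpace X]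
  [IsTopologicalAddGroup X] [ContinuousSMul ℝ X] [LocallyConvexSpace ℝ X] [T2Space X]
variable {Y : Type*} [AddCommGroup Y] [Module ℝ Y] [TopologicalSpace Y]
  [IsTopologicalAddGroup Y] [ContinuousSMul ℝ Y] [LocallyConvexSpace ℝ Y] [T2Space Y]
variable {Z : Type*} [AddCommGroup Z] [Module ℝ Z] [TopologicalSpace Z]
  [IsTopologicalAddGroup Z] [ContinuousSMul ℝ Z] [LocallyConvexSpace ℝ Z] [T2Space Z]

theorem normalCone_sublevel_system_general
    (m : ℕ) (f : Fin m → X → EReal)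
    (hpoly : ∃ j, IsGPolyhedral (epi (f j)) ∧
      ∀ i, i ≠ j → IsPolyhedral (epi (f i)))
    (γ : Fin m → ℝ) (xb : X)
    (hxb : ∀ i, f i xb ≤ (γ i : EReal))
    (hcont : ∀ i, ContinuousAt (f i) xb) :
    normalCone {x : X | ∀ i, f i x ≤ (γ i : EReal)} xb =
      {g : X →L[ℝ] ℝ | ∃ (c : Fin m → ℝ) (xs : Fin m → X →L[ℝ] ℝ),
        (∀ i, 0 ≤ c i) ∧ (∀ i, f i xb ≠ (γ i : EReal) → c i = 0) ∧
        (∀ i, xs i ∈ subdiff (f i) xb) ∧ g = ∑ i, c i • xs i} := by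
  have hpolyhedral : ∀ i, IsPolyhedral (epi (f i)) := by
    obtain ⟨j, hj, hother⟩ := hpoly
    intro i
    by_cases hij : i = j
    · subst hij
      exact hj.isPolyhedral_of_nonempty_interior
        (interior_epi_nonempty (hcont i) (ne_top_of_le_ne_top (by simp) (hxb i)))
    · exact hother i hij
  choose n F α hF using hpolyhedral
  exact (normalCone_sublevel_subset hF hxb hcont).antisymm
    sum_smul_subdiff_subset_normalCone_sublevel

theorem normalCone_sublevel_system
    (m : ℕ) (hm : 2 ≤ m) (f : Fin m → X → EReal)
    (hbot : ∀ i x, f i x ≠ ⊥)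
    (hpoly : ∃ j, IsGPolyhedral (epi (f j)) ∧
      ∀ i, i ≠ j → IsPolyhedral (epi (f i)))
    (γ : Fin m → ℝ) (xb : X)
    (hxb : ∀ i, f i xb ≤ (γ i : EReal))
    (hcont : ∀ i, ContinuousAt (f i) xb) :
    normalCone {x : X | ∀ i, f i x ≤ (γ i : EReal)} xb =
      {g : X →L[ℝ] ℝ | ∃ (c : Fin m → ℝ) (xs : Fin m → X →L[ℝ] ℝ),
        (∀ i, 0 ≤ c i) ∧ (∀ i, f i xb ≠ (γ i : EReal) → c i = 0) ∧
        (∀ i, xs i ∈ subdiff (f i) xb) ∧ g = ∑ i, c i • xs i} :=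
  normalCone_sublevel_system_general m f hpoly γ xb hxb hcont
end

section
/- Let μ(x) = inf{φ(x,y) : y ∈ F(x)} with μ > −∞ everywhere, where one of φ : X × Y → (−∞, ∞] and F : X ⇉ Y is polyhedral convex and the other generalized polyhedral convex. If x̄ ∈ dom(μ) and ȳ ∈ F(x̄) satisfies μ(x̄) = φ(x̄, ȳ), then ∂μ(x̄) = ∪_{(u,v) ∈ ∂φ(x̄,ȳ)} [u + D*F(x̄, ȳ)(v)]. -/
open Set Pointwise

variable {X : Type*} [AddCommGroup X] [Module ℝ X] [TopologicalSpace X]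
  [IsTopologicalAddGroup X] [ContinuousSMul ℝ X] [LocallyConvexSpace ℝ X] [T2Space X]
variable {Y : Type*} [AddCommGroup Y] [Module ℝ Y] [TopologicalSpace Y]
  [IsTopologicalAddGroup Y] [ContinuousSMul ℝ Y] [LocallyConvexSpace ℝ Y] [T2Space Y]
variable {Z : Type*} [AddCommGroup Z] [Module ℝ Z] [TopologicalSpace Z]
  [IsTopologicalAddGroup Z] [ContinuousSMul ℝ Z] [LocallyConvexSpace ℝ Z] [T2Space Z]

/-!
A functional `w` lies in `∂μ(x̄)` exactly when `(x, y, t) ↦ w x - t` is normal at `(x̄, ȳ, μ(x̄))`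
to `epi φ ∩ (gph F × ℝ)`. For the intersection of a polyhedral and a generalized polyhedral set
the normal cone is the sum of the two normal cones: Farkas' lemma on the linear part of the affine
constraint writes a normal functional as a nonnegative combination of active inequalities plus a
functional vanishing on that linear part. The component normal to `epi φ` has `t`-coefficient
`-1`, so it is a subgradient `(u, v)` of `φ`; the component normal to `gph F` is a coderivative.
-/

open Filter Topology

section Farkas

variable {𝕜 V ι : Type*} [Field 𝕜] [LinearOrder 𝕜] [IsStrictOrderedRing 𝕜]
  [AddCommGroup V] [Module 𝕜 V]

theorem Module.Dual.sub_div_smul_apply (k l : Module.Dual 𝕜 V) (x₀ x : V) :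
    (k - (k x₀ / l x₀) • l) x = k (x - (l x / l x₀) • x₀) := by
  simp only [LinearMap.sub_apply, LinearMap.smul_apply, map_sub, map_smul, smul_eq_mul]
  ring

theorem Module.Dual.eq_of_sub_div_smul_eq_sum {s : Finset ι} {f : ι → Module.Dual 𝕜 V}
    {g l : Module.Dual 𝕜 V} {x₀ : V} {μ : ι → 𝕜}
    (h : g - (g x₀ / l x₀) • l = ∑ i ∈ s, μ i • (f i - (f i x₀ / l x₀) • l)) :
    g = ((g x₀ - ∑ i ∈ s, μ i * f i x₀) / l x₀) • l + ∑ i ∈ s, μ i • f i := by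
  ext x
  have hx := LinearMap.congr_fun h x
  simp only [LinearMap.sub_apply, LinearMap.smul_apply, LinearMap.add_apply,
    LinearMap.sum_apply, smul_eq_mul, mul_sub, Finset.sum_sub_distrib] at hx ⊢
  have hsum : ∑ i ∈ s, μ i * (f i x₀ / l x₀ * l x) = (∑ i ∈ s, μ i * f i x₀) / l x₀ * l x := by
    rw [Finset.sum_div, Finset.sum_mul]
    exact Finset.sum_congr rfl fun i _ => by ring
  linear_combination hx - hsum

theorem exists_nonneg_eq_sum_smul_of_forall_nonpos [DecidableEq ι] (s : Finset ι)
    (f : ι → Module.Dual 𝕜 V) (g : Module.Dual 𝕜 V)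
    (h : ∀ x, (∀ i ∈ s, f i x ≤ 0) → g x ≤ 0) :
    ∃ lam : ι → 𝕜, (∀ i, 0 ≤ lam i) ∧ g = ∑ i ∈ s, lam i • f i := by
  induction s using Finset.induction_on generalizing f g with
  | empty =>
    refine ⟨0, fun _ => le_rfl, LinearMap.ext fun x => ?_⟩
    have h₁ := h x (by simp)
    have h₂ := h (-x) (by simp)
    rw [map_neg] at h₂
    simp only [Finset.sum_empty, LinearMap.zero_apply]
    linarith
  | insert a s ha ih =>
    have hupd (μ : ι → 𝕜) (c : 𝕜) :
        ∑ i ∈ insert a s, Function.update μ a c i • f i = c • f a + ∑ i ∈ s, μ i • f i := by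
      rw [Finset.sum_insert ha, Function.update_self]
      exact congrArg _ <| Finset.sum_congr rfl fun i hi => by
        rw [Function.update_of_ne (ne_of_mem_of_not_mem hi ha)]
    have hupd_nonneg {μ : ι → 𝕜} (hμ : ∀ i, 0 ≤ μ i) {c : 𝕜} (hc : 0 ≤ c) (i : ι) :
        0 ≤ Function.update μ a c i := by
      rcases eq_or_ne i a with rfl | hi <;> simp [*]
    by_cases hs : ∀ x, (∀ i ∈ s, f i x ≤ 0) → g x ≤ 0
    · obtain ⟨μ, hμ, rfl⟩ := ih f g hs
      exact ⟨_, hupd_nonneg hμ le_rfl, by rw [hupd, zero_smul, zero_add]⟩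
    push Not at hs
    obtain ⟨x₀, hx₀, hgx₀⟩ := hs
    have hfa : 0 < f a x₀ := by
      by_contra! hle
      exact hgx₀.not_ge (h x₀ (Finset.forall_mem_insert .. |>.2 ⟨hle, hx₀⟩))
    -- On `ker (f a)` the remaining constraints already force `g ≤ 0`; projecting along `x₀`
    -- onto that kernel gives a Farkas problem with one constraint fewer.
    let proj (k : Module.Dual 𝕜 V) : Module.Dual 𝕜 V := k - (k x₀ / f a x₀) • f a
    obtain ⟨μ, hμ, hg⟩ := ih (fun i => proj (f i)) (proj g) fun x hx => by
      rw [Module.Dual.sub_div_smul_apply]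
      refine h _ (Finset.forall_mem_insert .. |>.2 ⟨?_, fun i hi => ?_⟩)
      · rw [map_sub, map_smul, smul_eq_mul, div_mul_cancel₀ _ hfa.ne', sub_self]
      · simpa only [proj, Module.Dual.sub_div_smul_apply] using hx i hi
    have hsum : ∑ i ∈ s, μ i * f i x₀ ≤ 0 :=
      Finset.sum_nonpos fun i hi => mul_nonpos_of_nonneg_of_nonpos (hμ i) (hx₀ i hi)
    have hc : 0 ≤ (g x₀ - ∑ i ∈ s, μ i * f i x₀) / f a x₀ := div_nonneg (by linarith) hfa.le
    exact ⟨_, hupd_nonneg hμ hc, by rw [hupd]; exact Module.Dual.eq_of_sub_div_smul_eq_sum hg⟩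

end Farkas

theorem exists_pos_forall_add_smul_le {E ι : Type*} [AddCommGroup E] [Module ℝ E] [Finite ι]
    (f : ι → E →ₗ[ℝ] ℝ) (α : ι → ℝ) {z d : E} (hz : ∀ i, f i z ≤ α i)
    (hd : ∀ i, f i z = α i → f i d ≤ 0) : ∃ τ : ℝ, 0 < τ ∧ ∀ i, f i (z + τ • d) ≤ α i := by
  have hev : ∀ᶠ τ in 𝓝[>] (0 : ℝ), ∀ i, f i (z + τ • d) ≤ α i := by
    refine eventually_all.2 fun i => ?_
    simp only [map_add, map_smul, smul_eq_mul]
    rcases (hz i).eq_or_lt with hact | hlt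
    · filter_upwards [self_mem_nhdsWithin] with τ (hτ : 0 < τ)
      nlinarith [hd i hact]
    · have hcont : ContinuousAt (fun τ : ℝ => f i z + τ * f i d) 0 := by fun_prop
      exact nhdsWithin_le_nhds <| (hcont.eventually_lt continuousAt_const (by simpa using hlt)).mono
        fun _ => le_of_lt
  obtain ⟨τ, hτ, hτpos⟩ := (hev.and self_mem_nhdsWithin).exists
  exact ⟨τ, hτpos, hτ⟩

section NormalCone

variable {E : Type*} [AddCommGroup E] [Module ℝ E] [TopologicalSpace E]

theorem normalCone_anti {Ω Ω' : Set E} (h : Ω ⊆ Ω') (x : E) :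
    normalCone Ω' x ⊆ normalCone Ω x :=
  fun _ hf z hz => hf z (h hz)

theorem add_mem_normalCone {Ω : Set E} {x : E} {f g : E →L[ℝ] ℝ} (hf : f ∈ normalCone Ω x)
    (hg : g ∈ normalCone Ω x) : f + g ∈ normalCone Ω x :=
  fun z hz => add_nonpos (hf z hz) (hg z hz)

theorem sum_smul_mem_normalCone {ι : Type*} [Fintype ι] (f : ι → E →L[ℝ] ℝ) (α : ι → ℝ)
    {zb : E} {lam : ι → ℝ} (hlam : ∀ i, 0 ≤ lam i) (hslack : ∀ i, lam i ≠ 0 → f i zb = α i) :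
    ∑ i, lam i • f i ∈ normalCone {z | ∀ i, f i z ≤ α i} zb := by
  intro z hz
  simp only [FunLike.coe_sum, Finset.sum_apply, FunLike.coe_smul, Pi.smul_apply, smul_eq_mul]
  refine Finset.sum_nonpos fun i _ => ?_
  rcases eq_or_ne (lam i) 0 with h0 | h0
  · simp [h0]
  · rw [map_sub, hslack i h0]
    exact mul_nonpos_of_nonneg_of_nonpos (hlam i) (sub_nonpos.2 (hz i))

theorem mem_normalCone_vadd_submodule {M : Submodule ℝ E} {c zb : E}
    (hzb : zb ∈ c +ᵥ (M : Set E)) {h : E →L[ℝ] ℝ} (hh : ∀ z ∈ M, h z = 0) :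
    h ∈ normalCone (c +ᵥ (M : Set E)) zb := by
  intro z hz
  rw [mem_leftAddCoset_iff] at hz hzb
  refine (hh _ ?_).le
  simpa using M.sub_mem hz hzb

theorem exists_eq_sum_smul_add_of_mem_normalCone {ι : Type*} [Fintype ι]
    (f : ι → E →L[ℝ] ℝ) (α : ι → ℝ) (M : Submodule ℝ E) (c : E) {zb : E}
    (hzb : zb ∈ {z | ∀ i, f i z ≤ α i} ∩ (c +ᵥ (M : Set E))) {w : E →L[ℝ] ℝ}
    (hw : w ∈ normalCone ({z | ∀ i, f i z ≤ α i} ∩ (c +ᵥ (M : Set E))) zb) :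
    ∃ (lam : ι → ℝ) (h : E →L[ℝ] ℝ), (∀ i, 0 ≤ lam i) ∧ (∀ i, lam i ≠ 0 → f i zb = α i) ∧
      (∀ z ∈ M, h z = 0) ∧ w = ∑ i, lam i • f i + h := by
  classical
  obtain ⟨hzbP, hzbM⟩ := hzb
  set act := Finset.univ.filter fun i => f i zb = α i
  have hdir (d : M) (hd : ∀ i ∈ act, f i d ≤ 0) : w d ≤ 0 := by
    obtain ⟨τ, hτ, hfeas⟩ := exists_pos_forall_add_smul_le (fun i => (f i : E →ₗ[ℝ] ℝ)) α hzbP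
      fun i hi => hd i (by simpa [act] using hi)
    have hmem : zb + τ • (d : E) ∈ c +ᵥ (M : Set E) := by
      rw [mem_leftAddCoset_iff] at hzbM ⊢
      simpa [add_assoc] using M.add_mem hzbM (M.smul_mem τ d.2)
    have := hw _ ⟨hfeas, hmem⟩
    rw [add_sub_cancel_left, map_smul, smul_eq_mul] at this
    exact nonpos_of_mul_nonpos_right this hτ
  obtain ⟨lam, hlam, hwM⟩ := exists_nonneg_eq_sum_smul_of_forall_nonpos act
    (fun i => (f i : E →ₗ[ℝ] ℝ) ∘ₗ M.subtype) ((w : E →ₗ[ℝ] ℝ) ∘ₗ M.subtype) hdir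
  refine ⟨fun i => if i ∈ act then lam i else 0, w - ∑ i ∈ act, lam i • f i, fun i => ?_,
    fun i hi => ?_, fun z hz => ?_, ?_⟩
  · dsimp only
    split_ifs <;> simp [hlam]
  · by_contra hna
    exact hi (if_neg (by simpa [act] using hna))
  · simpa [sub_eq_zero] using LinearMap.congr_fun hwM ⟨z, hz⟩
  · simp only [ite_smul, zero_smul, Finset.sum_ite_mem, Finset.univ_inter, add_sub_cancel]

end NormalCone

section Polyhedral

variable {E : Type*} [AddCommGroup E] [Module ℝ E] [TopologicalSpace E]

theorem IsPolyhedral.preimage {F : Type*} [AddCommGroup F] [Module ℝ F] [TopologicalSpace F]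
    {P : Set F} (hP : IsPolyhedral P) (T : E →L[ℝ] F) : IsPolyhedral (T ⁻¹' P) := by
  obtain ⟨m, f, α, rfl⟩ := hP
  exact ⟨m, fun i => (f i).comp T, α, rfl⟩

theorem IsGPolyhedral.preimage {F : Type*} [AddCommGroup F] [Module ℝ F] [TopologicalSpace F]
    {Q : Set F} (hQ : IsGPolyhedral Q) (T : E →L[ℝ] F) (hT : Function.Surjective T) :
    IsGPolyhedral (T ⁻¹' Q) := by
  obtain ⟨P, a, L, hP, hL, rfl⟩ := hQ
  obtain ⟨a, rfl⟩ := hT a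
  refine ⟨T ⁻¹' P, a, L.comap (T : E →ₗ[ℝ] F), hP.preimage T, hL.preimage T.continuous, ?_⟩
  ext x
  simp [mem_leftAddCoset_iff]

theorem exists_add_of_mem_normalCone_inter {Ω₁ Ω₂ : Set E} (h₁ : IsPolyhedral Ω₁)
    (h₂ : IsGPolyhedral Ω₂) {zb : E} (hzb : zb ∈ Ω₁ ∩ Ω₂) {W : E →L[ℝ] ℝ}
    (hW : W ∈ normalCone (Ω₁ ∩ Ω₂) zb) :
    ∃ Φ ∈ normalCone Ω₁ zb, ∃ Ψ ∈ normalCone Ω₂ zb, W = Φ + Ψ := by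
  obtain ⟨m, f, α, rfl⟩ := h₁
  obtain ⟨_, c, M, ⟨n, g, β, rfl⟩, -, rfl⟩ := h₂
  have hS : {z | ∀ i, f i z ≤ α i} ∩ ({z | ∀ j, g j z ≤ β j} ∩ (c +ᵥ (M : Set E))) =
      {z | ∀ k, Sum.elim f g k z ≤ Sum.elim α β k} ∩ (c +ᵥ (M : Set E)) := by
    ext
    simp [Sum.forall, and_assoc]
  rw [hS] at hzb hW
  obtain ⟨lam, h, hlam, hslack, hM, rfl⟩ :=
    exists_eq_sum_smul_add_of_mem_normalCone _ _ M c hzb hW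
  refine ⟨∑ i, lam (.inl i) • f i,
    sum_smul_mem_normalCone f α (fun i => hlam _) fun i => hslack (.inl i),
    ∑ j, lam (.inr j) • g j + h, add_mem_normalCone
      (normalCone_anti inter_subset_left _
        (sum_smul_mem_normalCone g β (fun j => hlam _) fun j => hslack (.inr j)))
      (normalCone_anti inter_subset_right _ (mem_normalCone_vadd_submodule hzb.2 hM)), ?_⟩
  rw [Fintype.sum_sum_type, add_assoc]
  rfl

theorem exists_add_of_mem_normalCone_inter_of_or {Ω₁ Ω₂ : Set E}
    (h : (IsPolyhedral Ω₁ ∧ IsGPolyhedral Ω₂) ∨ (IsGPolyhedral Ω₁ ∧ IsPolyhedral Ω₂))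
    {zb : E} (hzb : zb ∈ Ω₁ ∩ Ω₂) {W : E →L[ℝ] ℝ} (hW : W ∈ normalCone (Ω₁ ∩ Ω₂) zb) :
    ∃ Φ ∈ normalCone Ω₁ zb, ∃ Ψ ∈ normalCone Ω₂ zb, W = Φ + Ψ := by
  rcases h with ⟨h₁, h₂⟩ | ⟨h₁, h₂⟩
  · exact exists_add_of_mem_normalCone_inter h₁ h₂ hzb hW
  · rw [inter_comm] at hzb hW
    obtain ⟨Ψ, hΨ, Φ, hΦ, rfl⟩ := exists_add_of_mem_normalCone_inter h₂ h₁ hzb hW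
    exact ⟨Φ, hΦ, Ψ, hΨ, add_comm _ _⟩

end Polyhedral

section Epigraph

open ContinuousLinearMap

variable {E : Type*} [AddCommGroup E] [Module ℝ E] [TopologicalSpace E]

theorem comp_fst_sub_snd_mem_normalCone_epi_inter {f : E → EReal} {G : Set E} {zb : E}
    {tb : ℝ} (hf : f zb = tb) {ℓ : E →L[ℝ] ℝ} (hℓ : ∀ z ∈ G, (ℓ (z - zb) : EReal) + f zb ≤ f z) :
    ℓ.comp (fst ℝ E ℝ) - snd ℝ E ℝ ∈ normalCone (epi f ∩ Prod.fst ⁻¹' G) (zb, tb) := by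
  rintro ⟨z, t⟩ ⟨hzt, hz⟩
  have := (hℓ z hz).trans hzt
  rw [hf, ← EReal.coe_add, EReal.coe_le_coe_iff] at this
  simp only [Prod.mk_sub_mk, sub_apply, comp_apply, coe_fst', coe_snd']
  linarith

theorem mem_subdiff_of_comp_fst_sub_snd_mem_normalCone_epi {f : E → EReal} {zb : E} {tb : ℝ}
    (hf : f zb = tb) {ℓ : E →L[ℝ] ℝ}
    (hℓ : ℓ.comp (fst ℝ E ℝ) - snd ℝ E ℝ ∈ normalCone (epi f) (zb, tb)) :
    ℓ ∈ subdiff f zb := by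
  intro z
  rw [hf, ← EReal.coe_add]
  refine EReal.le_of_forall_lt_iff_le.1 fun t ht => ?_
  have := hℓ (z, t) ht.le
  simp only [Prod.mk_sub_mk, sub_apply, comp_apply, coe_fst', coe_snd'] at this
  exact EReal.coe_le_coe_iff.2 (by linarith)

theorem exists_eq_comp_fst_of_mem_normalCone_preimage_fst {W : Type*} [AddCommGroup W]
    [Module ℝ W] [TopologicalSpace W] {G : Set E} {zb : E × W} (hzb : zb.1 ∈ G)
    {Ψ : E × W →L[ℝ] ℝ} (hΨ : Ψ ∈ normalCone (Prod.fst ⁻¹' G) zb) :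
    ∃ ψ ∈ normalCone G zb.1, Ψ = ψ.comp (fst ℝ E W) := by
  have hsnd (t : W) : Ψ (0, t) = 0 := by
    have h₁ := hΨ (zb.1, zb.2 + t) hzb
    have h₂ := hΨ (zb.1, zb.2 - t) hzb
    rw [show (zb.1, zb.2 - t) - zb = -(0, t) by ext <;> simp [sub_eq_add_neg], map_neg] at h₂
    rw [show (zb.1, zb.2 + t) - zb = (0, t) by ext <;> simp] at h₁
    linarith
  refine ⟨Ψ.comp (inl ℝ E W), fun p hp => ?_, ext fun ⟨p, t⟩ => ?_⟩
  · have := hΨ (p, zb.2) hp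
    rwa [show (p, zb.2) - zb = inl ℝ E W (p - zb.1) by ext <;> simp] at this
  · rw [show (p, t) = (p, 0) + (0, t) by simp, map_add, hsnd]
    simp

end Epigraph

section OptimalValue

open ContinuousLinearMap

variable {E V : Type*} [AddCommGroup E] [Module ℝ E] [TopologicalSpace E]
  [AddCommGroup V] [Module ℝ V] [TopologicalSpace V]

theorem comp_inl_mem_coderiv {F : E → Set V} {xb : E} {yb : V} {ψ : E × V →L[ℝ] ℝ}
    (hψ : ψ ∈ normalCone (gph F) (xb, yb)) :
    ψ.comp (inl ℝ E V) ∈ coderiv F xb yb (-ψ.comp (inr ℝ E V)) := by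
  intro x y hy
  have := hψ (x, y) hy
  rw [show (x, y) - (xb, yb) = (x - xb, 0) + (0, y - yb) by simp, map_add] at this
  simpa using this

theorem add_mem_subdiff_iInf {φ : E × V → EReal} {F : E → Set V} {xb : E} {yb : V}
    (hopt : (⨅ y ∈ F xb, φ (xb, y)) = φ (xb, yb)) {u : E →L[ℝ] ℝ} {v : V →L[ℝ] ℝ}
    (huv : ∀ x y, ((u (x - xb) + v (y - yb) : ℝ) : EReal) + φ (xb, yb) ≤ φ (x, y))
    {d : E →L[ℝ] ℝ} (hd : d ∈ coderiv F xb yb v) :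
    u + d ∈ subdiff (fun x => ⨅ y ∈ F x, φ (x, y)) xb := by
  intro x
  simp only [hopt]
  refine le_iInf₂ fun y hy => le_trans ?_ (huv x y)
  gcongr
  linarith [hd x y hy, add_apply u d (x - xb)]

theorem comp_inl_add_comp_inr_le_of_mem_subdiff {φ : E × V → EReal} {xb : E} {yb : V}
    {ℓ : E × V →L[ℝ] ℝ} (hℓ : ℓ ∈ subdiff φ (xb, yb)) (x : E) (y : V) :
    ((ℓ.comp (inl ℝ E V) (x - xb) + ℓ.comp (inr ℝ E V) (y - yb) : ℝ) : EReal) + φ (xb, yb) ≤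
      φ (x, y) := by
  simpa [← map_add] using hℓ (x, y)

end OptimalValue

theorem subdifferential_optimal_value_function_general
    (φ : X × Y → EReal) (F : X → Set Y)
    (hφbot : ∀ p, φ p ≠ ⊥)
    (hFφ : (IsPolyhedral (epi φ) ∧ IsGPolyhedral (gph F)) ∨
           (IsGPolyhedral (epi φ) ∧ IsPolyhedral (gph F)))
    (xb : X) (yb : Y) (hyb : yb ∈ F xb)
    (hdom : (⨅ y ∈ F xb, φ (xb, y)) ≠ ⊤)
    (hopt : (⨅ y ∈ F xb, φ (xb, y)) = φ (xb, yb)) :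
    subdiff (fun x => ⨅ y ∈ F x, φ (x, y)) xb =
      {w : X →L[ℝ] ℝ | ∃ (u : X →L[ℝ] ℝ) (v : Y →L[ℝ] ℝ),
        (∀ x : X, ∀ y : Y,
          ((u (x - xb) + v (y - yb) : ℝ) : EReal) + φ (xb, yb) ≤ φ (x, y)) ∧
        ∃ d ∈ coderiv F xb yb v, w = u + d} := by
  open ContinuousLinearMap in
  obtain ⟨tb, htb⟩ : ∃ tb : ℝ, φ (xb, yb) = tb :=
    ⟨_, (EReal.coe_toReal (hopt ▸ hdom) (hφbot _)).symm⟩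
  ext w
  refine ⟨fun hw => ?_, fun ⟨u, v, huv, d, hd, hw⟩ => hw ▸ add_mem_subdiff_iInf hopt huv hd⟩
  have hW := comp_fst_sub_snd_mem_normalCone_epi_inter (G := gph F) htb
    (ℓ := w.comp (fst ℝ X Y)) fun p hp => hopt ▸ (hw p.1).trans (iInf₂_le p.2 hp)
  have hpoly := hFφ.imp (And.imp_right (·.preimage (fst ℝ (X × Y) ℝ) Prod.fst_surjective))
    (And.imp_right (·.preimage (fst ℝ (X × Y) ℝ)))
  obtain ⟨Φ, hΦ, Ψ, hΨ, hWΦΨ⟩ :=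
    exists_add_of_mem_normalCone_inter_of_or hpoly ⟨htb.le, hyb⟩ hW
  obtain ⟨ψ, hψ, rfl⟩ := exists_eq_comp_fst_of_mem_normalCone_preimage_fst hyb hΨ
  set ℓ := w.comp (fst ℝ X Y) - ψ
  have hΦℓ : Φ = ℓ.comp (fst ℝ (X × Y) ℝ) - snd ℝ (X × Y) ℝ := by
    rw [eq_sub_of_add_eq hWΦΨ.symm]
    ext p <;> simp [ℓ]
  have hℓ := mem_subdiff_of_comp_fst_sub_snd_mem_normalCone_epi htb (hΦℓ ▸ hΦ)
  have hv : ℓ.comp (inr ℝ X Y) = -ψ.comp (inr ℝ X Y) := by ext; simp [ℓ]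
  refine ⟨ℓ.comp (inl ℝ X Y), ℓ.comp (inr ℝ X Y), comp_inl_add_comp_inr_le_of_mem_subdiff hℓ,
    ψ.comp (inl ℝ X Y), hv ▸ comp_inl_mem_coderiv hψ, ?_⟩
  ext
  simp [ℓ]

theorem subdifferential_optimal_value_function
    (φ : X × Y → EReal) (F : X → Set Y)
    (hφbot : ∀ p, φ p ≠ ⊥)
    (hμbot : ∀ x, (⨅ y ∈ F x, φ (x, y)) ≠ ⊥)
    (hFφ : (IsPolyhedral (epi φ) ∧ IsGPolyhedral (gph F)) ∨
           (IsGPolyhedral (epi φ) ∧ IsPolyhedral (gph F)))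
    (xb : X) (yb : Y) (hyb : yb ∈ F xb)
    (hdom : (⨅ y ∈ F xb, φ (xb, y)) ≠ ⊤)
    (hopt : (⨅ y ∈ F xb, φ (xb, y)) = φ (xb, yb)) :
    subdiff (fun x => ⨅ y ∈ F x, φ (x, y)) xb =
      {w : X →L[ℝ] ℝ | ∃ (u : X →L[ℝ] ℝ) (v : Y →L[ℝ] ℝ),
        (∀ x : X, ∀ y : Y,
          ((u (x - xb) + v (y - yb) : ℝ) : EReal) + φ (xb, yb) ≤ φ (x, y)) ∧
        ∃ d ∈ coderiv F xb yb v, w = u + d} :=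
  subdifferential_optimal_value_function_general φ F hφbot hFφ xb yb hyb hdom hopt
end
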